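/- arXiv:2605.09246 — 8 statements merged into one kernel-verified Lean document; each statement's English description precedes it below -/
import Mathlib

section
/- Let 2k < n ≤ tk with t ≥ 2 a real (or integer) parameter, and set h(n,k) = C(n-1,k-1) - C(n-k-1,k-1) + 1. Then h(n,k)^2 / C(n-1,k-1)^2 > 1 - 2((2t-3)/(2t-1))^(k-1). -/
/-!
With `A = C(n-1, k-1)` and `B = C(n-k-1, k-1)`, the ratio `B / A = ∏_{i<k-1} (n-k-1-i)/(n-1-i)` is a
product of values of the log-concave function `x ↦ x / (x + k)`. Pairing the factor `i` with `k-2-i`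
bounds it by the `(k-1)`-th power of the value at the mean, `(2n-3k)/(2n-k)`, which is at most
`(2t-3)/(2t-1)` because `n ≤ tk`. Finally `h² / A² > (A - B)² / A² ≥ 1 - 2B/A`.
-/

open Finset

theorem mul_mul_sq_le_add_mul_add_mul_sq {x y a : ℝ} (ha : 0 ≤ a) (hxya : 0 ≤ x + y + a) :
    x * y * (x + y + 2 * a) ^ 2 ≤ (x + a) * (y + a) * (x + y) ^ 2 := by
  have hdiff : (x + a) * (y + a) * (x + y) ^ 2 - x * y * (x + y + 2 * a) ^ 2
      = a * (x + y + a) * (x - y) ^ 2 := by ring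
  linarith [hdiff, mul_nonneg (mul_nonneg ha hxya) (sq_nonneg (x - y))]

theorem prod_range_sq_eq_prod_mul_reflect {M : Type*} [CommMonoid M] (f : ℕ → M) (K : ℕ) :
    (∏ i ∈ range K, f i) ^ 2 = ∏ i ∈ range K, f i * f (K - 1 - i) := by
  rw [sq, prod_mul_distrib]
  nth_rewrite 2 [← prod_range_reflect f K]
  rfl

theorem prod_mul_pow_le_prod_add_mul_pow {K : ℕ} {f : ℕ → ℝ} {a s : ℝ} (ha : 0 ≤ a)
    (hf : ∀ i < K, 0 ≤ f i) (hs : ∀ i < K, f i + f (K - 1 - i) = s) :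
    (∏ i ∈ range K, f i) * (s + 2 * a) ^ K ≤ (∏ i ∈ range K, (f i + a)) * s ^ K := by
  have hs0 : 0 ≤ s ^ K := by
    rcases K.eq_zero_or_pos with rfl | hK
    · simp
    · exact pow_nonneg (hs 0 hK ▸ add_nonneg (hf 0 hK) (hf _ (by omega))) K
  have hrhs : 0 ≤ (∏ i ∈ range K, (f i + a)) * s ^ K :=
    mul_nonneg (prod_nonneg fun i hi => add_nonneg (hf i (mem_range.1 hi)) ha) hs0
  refine (le_abs_self _).trans (abs_le_of_sq_le_sq ?_ hrhs)
  have hpow : ∀ u : ℝ, (u ^ K) ^ 2 = ∏ _i ∈ range K, u ^ 2 := fun u => by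
    rw [prod_const, card_range, ← pow_mul, ← pow_mul, mul_comm]
  rw [mul_pow, mul_pow, prod_range_sq_eq_prod_mul_reflect, prod_range_sq_eq_prod_mul_reflect,
    hpow, hpow, ← prod_mul_distrib, ← prod_mul_distrib]
  refine prod_le_prod (fun i hi => ?_) fun i hi => ?_
  · have hi := mem_range.1 hi
    have := hf i hi
    have := hf (K - 1 - i) (by omega)
    positivity
  · have hi := mem_range.1 hi
    rw [← hs i hi]
    exact mul_mul_sq_le_add_mul_add_mul_sq ha
      (by linarith [hf i hi, hf (K - 1 - i) (by omega)])

theorem Nat.cast_descFactorial_eq_prod_range {m K : ℕ} (h : K ≤ m) :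
    (m.descFactorial K : ℝ) = ∏ i ∈ range K, ((m : ℝ) - i) := by
  rw [Nat.descFactorial_eq_prod_range, Nat.cast_prod]
  exact prod_congr rfl fun i hi => Nat.cast_sub (by have := mem_range.1 hi; omega)

theorem Nat.choose_mul_pow_le_choose_add_mul_pow {m K : ℕ} (j : ℕ) (hK : K ≤ m) :
    (m.choose K : ℝ) * (2 * m - K + 1 + 2 * j) ^ K
      ≤ ((m + j).choose K : ℝ) * (2 * m - K + 1) ^ K := by
  have hf : ∀ i < K, 0 ≤ (m : ℝ) - i := fun i hi => by
    rw [sub_nonneg]; exact_mod_cast (by omega : i ≤ m)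
  have hs : ∀ i < K, ((m : ℝ) - i) + ((m : ℝ) - (K - 1 - i : ℕ)) = 2 * m - K + 1 := fun i hi => by
    rw [Nat.cast_sub (by omega), Nat.cast_sub (by omega)]; push_cast; ring
  have key := prod_mul_pow_le_prod_add_mul_pow (Nat.cast_nonneg j) hf hs
  have hfac : (0 : ℝ) < K.factorial := by exact_mod_cast K.factorial_pos
  rw [← Nat.cast_descFactorial_eq_prod_range hK] at key
  rw [show ∏ i ∈ range K, ((m : ℝ) - i + j) = ∏ i ∈ range K, (((m + j : ℕ) : ℝ) - i) from
      prod_congr rfl fun i _ => by push_cast; ring,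
    ← Nat.cast_descFactorial_eq_prod_range (by omega), Nat.descFactorial_eq_factorial_mul_choose,
    Nat.descFactorial_eq_factorial_mul_choose] at key
  push_cast at key
  rw [mul_assoc, mul_assoc] at key
  exact le_of_mul_le_mul_left key hfac

theorem one_sub_two_mul_lt_sub_add_one_sq_div_sq {A B r : ℝ} (hA : 0 < A) (hBA : B ≤ A)
    (hB : B ≤ A * r) : 1 - 2 * r < (A - B + 1) ^ 2 / A ^ 2 := by
  rw [lt_div_iff₀ (by positivity)]
  nlinarith [sq_nonneg B, mul_le_mul_of_nonneg_left hB hA.le]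

theorem stmt_1 (n k : ℕ) (t : ℝ) (ht : 2 ≤ t) (hk : 2 ≤ k)
    (h1 : 2 * k < n) (h2 : (n : ℝ) ≤ t * k) :
    (((n - 1).choose (k - 1) - (n - k - 1).choose (k - 1) + 1 : ℕ) : ℝ) ^ 2
        / ((n - 1).choose (k - 1) : ℝ) ^ 2
      > 1 - 2 * ((2 * t - 3) / (2 * t - 1)) ^ (k - 1) := by
  set A := (n - 1).choose (k - 1)
  set B := (n - k - 1).choose (k - 1)
  have hBA : B ≤ A := Nat.choose_le_choose _ (by omega)
  have hA : (0 : ℝ) < A := by exact_mod_cast Nat.choose_pos (by omega)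
  have hnk : (2 * k + 1 : ℝ) ≤ n := by exact_mod_cast h1
  have hchoose : (B : ℝ) * (2 * n - k) ^ (k - 1) ≤ A * (2 * n - 3 * k) ^ (k - 1) := by
    have := Nat.choose_mul_pow_le_choose_add_mul_pow k (m := n - k - 1) (K := k - 1) (by omega)
    rw [show n - k - 1 + k = n - 1 by omega, Nat.cast_sub (by omega), Nat.cast_sub (by omega),
      Nat.cast_sub (by omega)] at this
    push_cast at this
    convert this using 3 <;> ring
  have hratio : (2 * n - 3 * k : ℝ) / (2 * n - k) ≤ (2 * t - 3) / (2 * t - 1) := by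
    rw [div_le_div_iff₀ (by linarith) (by linarith)]
    nlinarith
  have hB : (B : ℝ) ≤ A * ((2 * t - 3) / (2 * t - 1)) ^ (k - 1) :=
    calc (B : ℝ) ≤ A * ((2 * n - 3 * k) / (2 * n - k)) ^ (k - 1) := by
          rw [div_pow, ← mul_div_assoc, le_div_iff₀ (pow_pos (by linarith) _)]
          exact hchoose
      _ ≤ _ := by gcongr; exact div_nonneg (by linarith) (by linarith)
  rw [Nat.cast_add, Nat.cast_sub hBA, Nat.cast_one]
  exact one_sub_two_mul_lt_sub_add_one_sq_div_sq hA (by exact_mod_cast hBA) hB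
end

section
/- Let 2k < n ≤ tk. Then C(n-k-1,k-1)/C(n-1,k-1) ≤ ((2t-3)/(2t-1))^(k-1). -/
/-!
Writing both binomial coefficients as falling factorials, the ratio is the product of the
`k - 1` factors `(n - k - 1 - i) / (n - 1 - i)`. The factors for `i` and `k - 2 - i` are
symmetric perturbations of the middle value `(2n - 3k) / (2n - k)`, so their product is at
most its square; and the middle value is at most `(2t - 3) / (2t - 1)` because `n ≤ tk`.
-/

open Finset

theorem Nat.cast_choose_div_cast_choose {K : Type*} [Field K] [CharZero K] (m p r : ℕ) :
    (m.choose r : K) / p.choose r = ∏ i ∈ range r, ((m : K) - i) / ((p : K) - i) := by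
  rw [Nat.cast_choose_eq_descPochhammer_div, Nat.cast_choose_eq_descPochhammer_div,
    descPochhammer_eval_eq_prod_range, descPochhammer_eval_eq_prod_range,
    div_div_div_cancel_right₀ (Nat.cast_ne_zero.2 r.factorial_ne_zero), prod_div_distrib]

theorem Finset.prod_range_le_pow_of_mul_reflect_le {R : Type*} [CommSemiring R] [LinearOrder R]
    [IsStrictOrderedRing R] {g : ℕ → R} {c : R} {r : ℕ} (hc : 0 ≤ c)
    (hg : ∀ i < r, 0 ≤ g i) (hpair : ∀ i < r, g i * g (r - 1 - i) ≤ c ^ 2) :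
    ∏ i ∈ range r, g i ≤ c ^ r := by
  have hsq : (∏ i ∈ range r, g i) ^ 2 ≤ (c ^ r) ^ 2 :=
    calc (∏ i ∈ range r, g i) ^ 2
        = ∏ i ∈ range r, g i * g (r - 1 - i) := by
          rw [prod_mul_distrib, prod_range_reflect g r, sq]
      _ ≤ ∏ _i ∈ range r, c ^ 2 := by
          refine prod_le_prod (fun i hi => ?_) (fun i hi => hpair i (mem_range.1 hi))
          have hi := mem_range.1 hi
          exact mul_nonneg (hg i hi) (hg _ (by omega))
      _ = (c ^ r) ^ 2 := by rw [prod_const, card_range, ← pow_mul, ← pow_mul, mul_comm]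
  exact (pow_le_pow_iff_left₀ (prod_nonneg fun i hi => hg i (mem_range.1 hi))
    (pow_nonneg hc r) two_ne_zero).1 hsq

section OrderedField

variable {K : Type*} [Field K] [LinearOrder K] [IsStrictOrderedRing K]

theorem sub_div_sub_mul_add_div_add_le_sq {A B x : K} (hA : 0 ≤ A) (hAB : A ≤ B)
    (hBx : 0 < B - x) (hBx' : 0 < B + x) :
    (A - x) / (B - x) * ((A + x) / (B + x)) ≤ (A / B) ^ 2 := by
  have hB : 0 < B := by linarith
  rw [div_mul_div_comm, div_pow, div_le_div_iff₀ (by positivity) (by positivity)]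
  nlinarith [mul_le_mul hAB hAB hA hB.le, sq_nonneg x]

theorem prod_range_sub_div_sub_le_pow {a b : K} {r : ℕ} (hab : a ≤ b) (ha : (r : K) - 1 < a) :
    ∏ i ∈ range r, (a - i) / (b - i) ≤ ((a - (r - 1) / 2) / (b - (r - 1) / 2)) ^ r := by
  rcases Nat.eq_zero_or_pos r with rfl | hr
  · simp
  have hr' : (1 : K) ≤ r := by exact_mod_cast hr
  refine prod_range_le_pow_of_mul_reflect_le
    (div_nonneg (by linarith) (by linarith)) (fun i hi => ?_) (fun i hi => ?_)
  · have : (i : K) + 1 ≤ r := by exact_mod_cast hi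
    exact div_nonneg (by linarith) (by linarith)
  · have hi' : (i : K) + 1 ≤ r := by exact_mod_cast hi
    have hreflect : ((r - 1 - i : ℕ) : K) = r - 1 - i := by
      rw [Nat.cast_sub (by omega), Nat.cast_sub (by omega), Nat.cast_one]
    rw [hreflect]
    have hpair := sub_div_sub_mul_add_div_add_le_sq (A := a - (r - 1) / 2)
      (B := b - (r - 1) / 2) (x := i - (r - 1) / 2) (by linarith) (by linarith) (by linarith)
      (by linarith [(Nat.cast_nonneg i : (0 : K) ≤ i)])
    exact le_of_eq_of_le (by ring) hpair

end OrderedField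

theorem stmt_2 (n k : ℕ) (t : ℝ) (hk : 1 ≤ k) (h1 : 2 * k < n) (h2 : (n : ℝ) ≤ t * k) :
    ((n - k - 1).choose (k - 1) : ℝ) / ((n - 1).choose (k - 1) : ℝ)
      ≤ ((2 * t - 3) / (2 * t - 1)) ^ (k - 1) := by
  have hk' : (1 : ℝ) ≤ k := by exact_mod_cast hk
  have h1' : 2 * (k : ℝ) + 1 ≤ n := by exact_mod_cast h1
  have ht : 2 < t := by nlinarith
  have ha : ((n - k - 1 : ℕ) : ℝ) = n - k - 1 := by
    rw [Nat.cast_sub (by omega), Nat.cast_sub (by omega), Nat.cast_one]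
  have hb : ((n - 1 : ℕ) : ℝ) = n - 1 := by rw [Nat.cast_sub (by omega), Nat.cast_one]
  have hr : ((k - 1 : ℕ) : ℝ) = k - 1 := by rw [Nat.cast_sub hk, Nat.cast_one]
  have hmid : (2 * n - 3 * k) / (2 * n - k : ℝ) ≤ (2 * t - 3) / (2 * t - 1) := by
    rw [div_le_div_iff₀ (by linarith) (by linarith)]
    nlinarith
  rw [Nat.cast_choose_div_cast_choose]
  calc _ ≤ ((((n - k - 1 : ℕ) : ℝ) - ((k - 1 : ℕ) - 1) / 2) /
          (((n - 1 : ℕ) : ℝ) - ((k - 1 : ℕ) - 1) / 2)) ^ (k - 1) :=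
        prod_range_sub_div_sub_le_pow (by rw [ha, hb]; linarith) (by rw [ha, hr]; linarith)
    _ = ((2 * n - 3 * k) / (2 * n - k : ℝ)) ^ (k - 1) := by
        rw [ha, hb, hr]
        congr 1
        field_simp
        ring
    _ ≤ _ := pow_le_pow_left₀ (div_nonneg (by linarith) (by linarith)) hmid _
end

section
/- For integers n, k, j with 1 ≤ j ≤ k-1 and n > 2k, we have ((n-k-j)(n-k-(k-j)))/((n-j)(n-(k-j))) ≤ ((n - 3k/2)/(n - k/2))^2. -/
/-!
Write `a = j`, `b = k - j` and `t = (b - a) / 2`. Since `a + b = k`, both products are differences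
of squares centred at the midpoints: `(n - k - a)(n - k - b) = (n - 3k/2)² - t²` and
`(n - a)(n - b) = (n - k/2)² - t²`. Subtracting the same `t² ≥ 0` from numerator and denominator
of a fraction `A / B ≤ 1` can only decrease it, and `t = 0` gives the right-hand side.
-/

section

variable {α : Type*} [Field α] [LinearOrder α] [IsStrictOrderedRing α]

theorem sub_div_sub_le_div {A B c : α} (hAB : A ≤ B) (hc : 0 ≤ c) (hcB : c < B) :
    (A - c) / (B - c) ≤ A / B := by
  rw [div_le_div_iff₀ (sub_pos.2 hcB) (hc.trans_lt hcB)]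
  nlinarith [mul_le_mul_of_nonneg_right hAB hc]

theorem mul_div_mul_le_sq_div_sq {n k a b : α} (hab : a + b = k) (ha : a < n) (hb : b < n)
    (hk : 0 ≤ k) (hkn : k ≤ n) :
    (n - k - a) * (n - k - b) / ((n - a) * (n - b))
      ≤ ((n - 3 * k / 2) / (n - k / 2)) ^ 2 := by
  subst hab
  have hnum : (n - (a + b) - a) * (n - (a + b) - b)
      = (n - 3 * (a + b) / 2) ^ 2 - ((b - a) / 2) ^ 2 := by ring
  have hden : (n - a) * (n - b) = (n - (a + b) / 2) ^ 2 - ((b - a) / 2) ^ 2 := by ring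
  have hden_pos : 0 < (n - a) * (n - b) := mul_pos (sub_pos.2 ha) (sub_pos.2 hb)
  rw [hden] at hden_pos
  rw [hnum, hden, div_pow (n - 3 * (a + b) / 2)]
  refine sub_div_sub_le_div ?_ (sq_nonneg _) (sub_pos.1 hden_pos)
  exact sq_le_sq' (by linarith) (by linarith)

end

theorem stmt_3_general (n k j : ℕ) (hj2 : j ≤ k - 1) (hn : 2 * k < n) :
    (((n : ℝ) - k - j) * ((n : ℝ) - k - (k - j : ℕ)))
        / (((n : ℝ) - j) * ((n : ℝ) - (k - j : ℕ)))
      ≤ (((n : ℝ) - 3 * k / 2) / ((n : ℝ) - k / 2)) ^ 2 := by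
  have hjk : j ≤ k := by omega
  have hn' : 2 * (k : ℝ) < n := by exact_mod_cast hn
  have hj : (0 : ℝ) ≤ j := j.cast_nonneg
  rw [Nat.cast_sub hjk]
  apply mul_div_mul_le_sq_div_sq (add_sub_cancel _ _) <;>
    linarith [(Nat.cast_le (α := ℝ)).2 hjk]

theorem stmt_3 (n k j : ℕ) (hj1 : 1 ≤ j) (hj2 : j ≤ k - 1) (hn : 2 * k < n) :
    (((n : ℝ) - k - j) * ((n : ℝ) - k - (k - j : ℕ)))
        / (((n : ℝ) - j) * ((n : ℝ) - (k - j : ℕ)))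
      ≤ (((n : ℝ) - 3 * k / 2) / ((n : ℝ) - k / 2)) ^ 2 :=
  stmt_3_general n k j hj2 hn
end

section
/- Let n > 2k ≥ 4 and fix F₀, G₀ ∈ [2,n]^(k) (k-subsets of {2,...,n}) with F₀ ∩ G₀ ≠ ∅. Define F = {F₀} ∪ {F ∈ [n]^(k) : 1 ∈ F, F ∩ G₀ ≠ ∅} and G = {G₀} ∪ {G ∈ [n]^(k) : 1 ∈ G, G ∩ F₀ ≠ ∅}. Then F and G are cross-intersecting, both non-trivial, and |F| = |G| = C(n-1,k-1) - C(n-k-1,k-1) + 1. -/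
/-!
Every member of either family other than `F₀`, `G₀` contains `1`, so two such members meet at `1`;
`F₀` meets `G₀` by assumption, and meets every other member of `G` because those were chosen to
meet `F₀` (symmetrically for `G₀`). Non-triviality: `F₀` avoids `1`, and any `i ≠ 1` is avoided by
a `k`-set through `1` and a point of `G₀ \ {i}`, which exists as `|G₀| ≥ 2`. For the count, among
the `C(n-1,k-1)` sets of the star at `1`, exactly `C(n-k-1,k-1)` are disjoint from `G₀`.
-/

open Finset

namespace Finset

variable {α : Type*} [DecidableEq α]

def starMeeting (s : Finset α) (a : α) (k : ℕ) (Y : Finset α) : Finset (Finset α) :=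
  {A ∈ s.powersetCard k | a ∈ A ∧ (A ∩ Y).Nonempty}

lemma card_filter_mem_powersetCard {s : Finset α} {a : α} (ha : a ∈ s) {k : ℕ} (hk : 0 < k) :
    #{A ∈ s.powersetCard k | a ∈ A} = (#s - 1).choose (k - 1) := by
  simpa [singleton_subset_iff] using
    card_filter_powersetCard_subset {a} s k (singleton_subset_iff.2 ha) (by simpa)

lemma card_filter_mem_disjoint_powersetCard {s Y : Finset α} {a : α} (ha : a ∈ s) (hY : Y ⊆ s)
    (haY : a ∉ Y) {k : ℕ} (hk : 0 < k) :
    #{A ∈ s.powersetCard k | a ∈ A ∧ Disjoint A Y} = (#s - #Y - 1).choose (k - 1) := by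
  have hsplit : {A ∈ s.powersetCard k | a ∈ A ∧ Disjoint A Y} =
      {A ∈ (s \ Y).powersetCard k | a ∈ A} := by
    ext A
    simp only [mem_filter, mem_powersetCard, subset_sdiff]
    tauto
  rw [hsplit, card_filter_mem_powersetCard (mem_sdiff.2 ⟨ha, haY⟩) hk, card_sdiff_of_subset hY]

lemma card_starMeeting {s Y : Finset α} {a : α} (ha : a ∈ s) (hY : Y ⊆ s) (haY : a ∉ Y)
    {k : ℕ} (hk : 0 < k) :
    #(starMeeting s a k Y) = (#s - 1).choose (k - 1) - (#s - #Y - 1).choose (k - 1) := by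
  have hpartition := card_filter_add_card_filter_not (s := {A ∈ s.powersetCard k | a ∈ A})
    (fun A => (A ∩ Y).Nonempty)
  simp only [filter_filter, not_nonempty_iff_eq_empty, ← disjoint_iff_inter_eq_empty] at hpartition
  rw [card_filter_mem_powersetCard ha hk, card_filter_mem_disjoint_powersetCard ha hY haY hk]
    at hpartition
  rw [starMeeting]
  omega

lemma insert_starMeeting_crossIntersecting {s X Y : Finset α} {a : α} {k : ℕ}
    (hXY : (X ∩ Y).Nonempty) :
    ∀ A ∈ insert X (starMeeting s a k Y), ∀ B ∈ insert Y (starMeeting s a k X),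
      (A ∩ B).Nonempty := by
  intro A hA B hB
  simp only [starMeeting, mem_insert, mem_filter] at hA hB
  rcases hA with rfl | ⟨-, haA, hAY⟩ <;> rcases hB with rfl | ⟨-, haB, hBX⟩
  · exact hXY
  · rwa [inter_comm]
  · exact hAY
  · exact ⟨a, mem_inter.2 ⟨haA, haB⟩⟩

lemma exists_mem_starMeeting_notMem {s Y : Finset α} {a i : α} {k : ℕ} (ha : a ∈ s)
    (hY : Y ⊆ s) (haY : a ∉ Y) (hY₂ : 2 ≤ #Y) (hk₂ : 2 ≤ k) (hks : k < #s) (hai : a ≠ i) :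
    ∃ A ∈ starMeeting s a k Y, i ∉ A := by
  obtain ⟨g, hg⟩ : (Y.erase i).Nonempty := by
    rw [← card_pos]
    have := pred_card_le_card_erase (s := Y) (a := i)
    omega
  obtain ⟨hgi, hgY⟩ := mem_erase.1 hg
  have hag : a ≠ g := fun hag => haY (hag ▸ hgY)
  have hpair : {a, g} ⊆ s.erase i := by
    simp only [insert_subset_iff, singleton_subset_iff, mem_erase]
    exact ⟨⟨hai, ha⟩, hgi, hY hgY⟩
  have hks' : k ≤ #(s.erase i) := by
    have := pred_card_le_card_erase (s := s) (a := i)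
    omega
  obtain ⟨A, hgA, hAs, hAk⟩ :=
    exists_subsuperset_card_eq hpair (by rw [card_pair hag]; exact hk₂) hks'
  refine ⟨A, ?_, fun hiA => (mem_erase.1 (hAs hiA)).1 rfl⟩
  simp only [starMeeting, mem_filter, mem_powersetCard]
  exact ⟨⟨hAs.trans (erase_subset _ _), hAk⟩, hgA (by simp),
    g, mem_inter.2 ⟨hgA (by simp), hgY⟩⟩

lemma exists_mem_insert_starMeeting_notMem {s X Y : Finset α} {a : α} {k : ℕ} (ha : a ∈ s)
    (haX : a ∉ X) (hY : Y ⊆ s) (haY : a ∉ Y) (hY₂ : 2 ≤ #Y) (hk₂ : 2 ≤ k) (hks : k < #s)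
    (i : α) : ∃ A ∈ insert X (starMeeting s a k Y), i ∉ A := by
  by_cases hai : a = i
  · exact ⟨X, mem_insert_self _ _, hai ▸ haX⟩
  · obtain ⟨A, hA, hiA⟩ := exists_mem_starMeeting_notMem ha hY haY hY₂ hk₂ hks hai
    exact ⟨A, mem_insert_of_mem hA, hiA⟩

end Finset

theorem stmt_7 (n k : ℕ) (hk : 2 ≤ k) (hn : 2 * k < n)
    (F₀ G₀ : Finset ℕ)
    (hF₀ : F₀ ∈ (Finset.Icc 2 n).powersetCard k)
    (hG₀ : G₀ ∈ (Finset.Icc 2 n).powersetCard k)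
    (hFG₀ : (F₀ ∩ G₀).Nonempty)
    (F G : Finset (Finset ℕ))
    (hF : F = insert F₀ (((Finset.Icc 1 n).powersetCard k).filter
        (fun A => 1 ∈ A ∧ (A ∩ G₀).Nonempty)))
    (hG : G = insert G₀ (((Finset.Icc 1 n).powersetCard k).filter
        (fun B => 1 ∈ B ∧ (B ∩ F₀).Nonempty))) :
    (∀ A ∈ F, ∀ B ∈ G, (A ∩ B).Nonempty) ∧
    (∀ i : ℕ, ∃ A ∈ F, i ∉ A) ∧ (∀ i : ℕ, ∃ B ∈ G, i ∉ B) ∧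
    F.card = (n - 1).choose (k - 1) - (n - k - 1).choose (k - 1) + 1 ∧
    G.card = (n - 1).choose (k - 1) - (n - k - 1).choose (k - 1) + 1 := by
  change F = insert F₀ (starMeeting (Icc 1 n) 1 k G₀) at hF
  change G = insert G₀ (starMeeting (Icc 1 n) 1 k F₀) at hG
  obtain ⟨hF₀s, hF₀c⟩ := mem_powersetCard.1 hF₀
  obtain ⟨hG₀s, hG₀c⟩ := mem_powersetCard.1 hG₀
  have h1 : 1 ∈ Icc 1 n := mem_Icc.2 ⟨le_rfl, by omega⟩
  have h1F₀ : 1 ∉ F₀ := fun h => by simpa using hF₀s h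
  have h1G₀ : 1 ∉ G₀ := fun h => by simpa using hG₀s h
  have hF₀s' : F₀ ⊆ Icc 1 n := hF₀s.trans (Icc_subset_Icc_left one_le_two)
  have hG₀s' : G₀ ⊆ Icc 1 n := hG₀s.trans (Icc_subset_Icc_left one_le_two)
  have hkn : k < #(Icc 1 n) := by rw [Nat.card_Icc]; omega
  have card_family (X Y : Finset ℕ) (hX : 1 ∉ X) (hY : Y ⊆ Icc 1 n) (h1Y : 1 ∉ Y)
      (hYc : #Y = k) : #(insert X (starMeeting (Icc 1 n) 1 k Y)) =
        (n - 1).choose (k - 1) - (n - k - 1).choose (k - 1) + 1 := by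
    rw [card_insert_of_notMem fun hX' => hX (mem_filter.1 hX').2.1,
      card_starMeeting h1 hY h1Y (by omega), hYc, Nat.card_Icc, Nat.add_sub_cancel]
  subst hF hG
  exact ⟨insert_starMeeting_crossIntersecting hFG₀,
    exists_mem_insert_starMeeting_notMem h1 h1F₀ hG₀s' h1G₀ (hG₀c ▸ hk) hk hkn,
    exists_mem_insert_starMeeting_notMem h1 h1G₀ hF₀s' h1F₀ (hF₀c ▸ hk) hk hkn,
    card_family F₀ G₀ h1F₀ hG₀s' h1G₀ hG₀c, card_family G₀ F₀ h1G₀ hF₀s' h1F₀ hF₀c⟩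
end

section
/- For k ≥ 8 and 2k+1 ≤ n ≤ 3k, with h(n,k) = C(n-1,k-1) - C(n-k-1,k-1) + 1, the inequality C(n-2,k-2) + 2·C(n-3,k-2) + h(n,k)^2/(C(n-2,k-2) + 2·C(n-3,k-2)) > 2·C(n-1,k-1) holds. -/
/-!
Put `a = C(n-2,k-2)`, `b = C(n-3,k-2)`, `c = C(n-3,k-1)`, `D = C(n-k-1,k-1)` and
`y = C(n-1,k-1) = a + b + c`, so that the denominator is `x = a + 2b` and `h = y - D + 1`.
Then `x (x + h²/x - 2y) = (y - x)² - 2yD + 2y + (D - 1)²` with `y - x = c - b`, so it suffices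
that `2yD ≤ (c - b)²`.

Write `k = r + 1`, `n = 2r + t + 3` with `t ≤ r`. Then `(c - b)(r + t + 1) = (t + 1) c`,
`y ≤ 4c`, `D (t + 1) = C(r+t,r) (r + t + 1)` and, raising the top index from `r + t` to `2r + t`
one step at a time, `3^r C(r+t,r) ≤ 2^r c`. Together these reduce `2yD ≤ (c - b)²` to
`8 (r + 1)³ 2^r ≤ 3^r`, which holds for `r ≥ 31`; the cases `7 ≤ r ≤ 30` are checked by
computation.
-/

theorem choose_succ_le_two_mul_choose {N r : ℕ} (h : 2 * r ≤ N + 1) :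
    (N + 1).choose r ≤ 2 * N.choose r := by
  apply Nat.le_of_mul_le_mul_right _ (show 0 < N + 1 - r by omega)
  calc (N + 1).choose r * (N + 1 - r) = N.choose r * (N + 1) :=
        (Nat.choose_mul_succ_eq N r).symm
    _ ≤ N.choose r * (2 * (N + 1 - r)) := Nat.mul_le_mul_left _ (by omega)
    _ = 2 * N.choose r * (N + 1 - r) := by ring

theorem three_mul_choose_le_two_mul_choose_succ {N r : ℕ} (h : N + 1 ≤ 3 * r) :
    3 * N.choose r ≤ 2 * (N + 1).choose r := by
  apply Nat.le_of_mul_le_mul_right _ (Nat.succ_pos N)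
  calc 3 * N.choose r * (N + 1) = (N + 1).choose r * (3 * (N + 1 - r)) := by
        rw [mul_assoc, Nat.choose_mul_succ_eq]; ring
    _ ≤ (N + 1).choose r * (2 * (N + 1)) := Nat.mul_le_mul_left _ (by omega)
    _ = 2 * (N + 1).choose r * (N + 1) := by ring

theorem three_pow_mul_choose_le_two_pow_mul_choose_add {N r : ℕ} (j : ℕ) (h : N + j ≤ 3 * r) :
    3 ^ j * N.choose r ≤ 2 ^ j * (N + j).choose r := by
  induction j with
  | zero => simp
  | succ j ih =>
    calc 3 ^ (j + 1) * N.choose r = 3 * (3 ^ j * N.choose r) := by ring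
      _ ≤ 3 * (2 ^ j * (N + j).choose r) := Nat.mul_le_mul_left _ (ih (by omega))
      _ = 2 ^ j * (3 * (N + j).choose r) := by ring
      _ ≤ 2 ^ j * (2 * (N + j + 1).choose r) :=
          Nat.mul_le_mul_left _ (three_mul_choose_le_two_mul_choose_succ (by omega))
      _ = 2 ^ (j + 1) * (N + (j + 1)).choose r := by rw [← add_assoc]; ring

theorem eight_mul_succ_cube_mul_two_pow_le_three_pow {r : ℕ} (hr : 31 ≤ r) :
    8 * (r + 1) ^ 3 * 2 ^ r ≤ 3 ^ r := by
  induction r, hr using Nat.le_induction with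
  | base => norm_num
  | succ r hr ih =>
    have hcube : 2 * (r + 2) ^ 3 ≤ 3 * (r + 1) ^ 3 := by
      nlinarith [Nat.mul_le_mul_right (r * r) hr]
    calc 8 * (r + 1 + 1) ^ 3 * 2 ^ (r + 1) = 2 ^ r * 8 * (2 * (r + 2) ^ 3) := by ring
      _ ≤ 2 ^ r * 8 * (3 * (r + 1) ^ 3) := Nat.mul_le_mul_left _ hcube
      _ = 3 * (8 * (r + 1) ^ 3 * 2 ^ r) := by ring
      _ ≤ 3 * 3 ^ r := Nat.mul_le_mul_left _ ih
      _ = 3 ^ (r + 1) := by ring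

theorem choose_sub_choose_pred_mul (r t : ℕ) (hr : 0 < r) :
    ((2 * r + t).choose r - (2 * r + t).choose (r - 1)) * (r + t + 1)
      = (t + 1) * (2 * r + t).choose r := by
  have h := Nat.choose_succ_right_eq (2 * r + t) (r - 1)
  rw [Nat.sub_add_cancel hr, show 2 * r + t - (r - 1) = r + t + 1 by omega] at h
  rw [Nat.sub_mul, ← h, ← Nat.mul_sub, show r + t + 1 - r = t + 1 by omega, mul_comm]

theorem two_mul_choose_mul_choose_le_sq_of_large (r t : ℕ) (hr : 31 ≤ r) (ht : t ≤ r) :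
    2 * (2 * r + t + 2).choose r * (r + t + 1).choose r
      ≤ ((2 * r + t).choose r - (2 * r + t).choose (r - 1)) ^ 2 := by
  set c := (2 * r + t).choose r
  set E := (r + t).choose r
  set L := r + t + 1
  have hC : (2 * r + t + 2).choose r ≤ 4 * c := by
    calc (2 * r + t + 2).choose r ≤ 2 * (2 * r + t + 1).choose r :=
          choose_succ_le_two_mul_choose (by omega)
      _ ≤ 2 * (2 * c) := Nat.mul_le_mul_left _ (choose_succ_le_two_mul_choose (by omega))
      _ = 4 * c := by ring
  have hD : (r + t + 1).choose r * (t + 1) = E * L := by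
    rw [Nat.choose_mul_succ_eq, show r + t + 1 - r = t + 1 by omega]
  have hE : 3 ^ r * E ≤ 2 ^ r * c := by
    have := three_pow_mul_choose_le_two_pow_mul_choose_add (N := r + t) (r := r) r (by omega)
    rwa [show r + t + r = 2 * r + t by ring] at this
  have hL : 8 * L ^ 3 * 2 ^ r ≤ (t + 1) ^ 3 * 3 ^ r :=
    calc 8 * L ^ 3 * 2 ^ r ≤ 8 * ((r + 1) * (t + 1)) ^ 3 * 2 ^ r := by
          gcongr
          show r + t + 1 ≤ (r + 1) * (t + 1)
          nlinarith
      _ = (t + 1) ^ 3 * (8 * (r + 1) ^ 3 * 2 ^ r) := by ring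
      _ ≤ (t + 1) ^ 3 * 3 ^ r :=
          Nat.mul_le_mul_left _ (eight_mul_succ_cube_mul_two_pow_le_three_pow hr)
  have hm := choose_sub_choose_pred_mul r t (show 0 < r by omega)
  apply Nat.le_of_mul_le_mul_right _ (show 0 < L ^ 2 * (t + 1) * 3 ^ r by positivity)
  calc 2 * (2 * r + t + 2).choose r * (r + t + 1).choose r * (L ^ 2 * (t + 1) * 3 ^ r)
      = 2 * (2 * r + t + 2).choose r * ((r + t + 1).choose r * (t + 1)) * L ^ 2 * 3 ^ r := by
        ring
    _ ≤ 2 * (4 * c) * (E * L) * L ^ 2 * 3 ^ r := by rw [hD]; gcongr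
    _ = 8 * c * L ^ 3 * (3 ^ r * E) := by ring
    _ ≤ 8 * c * L ^ 3 * (2 ^ r * c) := by gcongr
    _ = c ^ 2 * (8 * L ^ 3 * 2 ^ r) := by ring
    _ ≤ c ^ 2 * ((t + 1) ^ 3 * 3 ^ r) := by gcongr
    _ = ((t + 1) * c) ^ 2 * (t + 1) * 3 ^ r := by ring
    _ = _ := by rw [← hm]; ring

theorem two_mul_choose_mul_choose_le_sq (r t : ℕ) (hr : 7 ≤ r) (ht : t ≤ r) :
    2 * (2 * r + t + 2).choose r * (r + t + 1).choose r
      ≤ ((2 * r + t).choose r - (2 * r + t).choose (r - 1)) ^ 2 := by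
  rcases le_or_gt 31 r with hlarge | hsmall
  · exact two_mul_choose_mul_choose_le_sq_of_large r t hlarge ht
  · -- `Nat.choose` unfolds by Pascal's recursion; the factorial form evaluates fast in the kernel.
    interval_cases r <;> interval_cases t <;>
      (simp only [Nat.choose_eq_descFactorial_div_factorial]; decide)

theorem two_mul_lt_add_sq_div {x y d : ℝ} (hx : 0 < x) (hy : 0 < y)
    (h : 2 * y * d ≤ (y - x) ^ 2) : 2 * y < x + (y - d + 1) ^ 2 / x := by
  rw [← sub_pos]
  have : x + (y - d + 1) ^ 2 / x - 2 * y
      = ((y - x) ^ 2 - 2 * y * d + 2 * y + (d - 1) ^ 2) / x := by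
    field_simp; ring
  rw [this]
  positivity

theorem stmt_10 (n k : ℕ) (hk : 8 ≤ k) (hn1 : 2 * k + 1 ≤ n) (hn2 : n ≤ 3 * k) :
    ((n - 2).choose (k - 2) : ℝ) + 2 * (n - 3).choose (k - 2)
        + (((n - 1).choose (k - 1) - (n - k - 1).choose (k - 1) + 1 : ℕ) : ℝ) ^ 2
          / (((n - 2).choose (k - 2) : ℝ) + 2 * (n - 3).choose (k - 2))
      > 2 * (n - 1).choose (k - 1) := by
  obtain ⟨r, t, rfl, rfl⟩ : ∃ r t, k = r + 1 ∧ n = 2 * r + t + 3 :=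
    ⟨k - 1, n - 2 * k - 1, by omega, by omega⟩
  have hr : 0 < r := by omega
  rw [show 2 * r + t + 3 - 1 = 2 * r + t + 2 by omega,
    show 2 * r + t + 3 - 2 = 2 * r + t + 1 by omega, show 2 * r + t + 3 - 3 = 2 * r + t by omega,
    show 2 * r + t + 3 - (r + 1) - 1 = r + t + 1 by omega, show r + 1 - 1 = r by omega,
    show r + 1 - 2 = r - 1 by omega]
  have hpascal : (2 * r + t + 2).choose r = (2 * r + t + 1).choose (r - 1)
      + (2 * r + t).choose (r - 1) + (2 * r + t).choose r := by
    rw [show 2 * r + t + 2 = 2 * r + t + 1 + 1 from rfl, Nat.choose_succ_left _ _ hr,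
      Nat.choose_succ_left (2 * r + t) _ hr]; omega
  have hbc : (2 * r + t).choose (r - 1) ≤ (2 * r + t).choose r := by
    have := Nat.choose_le_succ_of_lt_half_left (r := r - 1) (n := 2 * r + t) (by omega)
    rwa [Nat.sub_add_cancel hr] at this
  have hD : (r + t + 1).choose r ≤ (2 * r + t + 2).choose r := Nat.choose_le_choose _ (by omega)
  have hkey := two_mul_choose_mul_choose_le_sq r t (show 7 ≤ r by omega) (show t ≤ r by omega)
  rw [gt_iff_lt, Nat.cast_add, Nat.cast_sub hD, Nat.cast_one]
  have hx : 0 < (2 * r + t + 1).choose (r - 1) + 2 * (2 * r + t).choose (r - 1) := by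
    have := Nat.choose_pos (show r - 1 ≤ 2 * r + t by omega)
    omega
  apply two_mul_lt_add_sq_div (by exact_mod_cast hx) (by exact_mod_cast Nat.choose_pos (by omega))
  calc _ ≤ (((2 * r + t).choose r - (2 * r + t).choose (r - 1) : ℕ) : ℝ) ^ 2 := by
        exact_mod_cast hkey
    _ = _ := by rw [Nat.cast_sub hbc, hpascal]; push_cast; ring
end

section
/- For k ≥ 8 and 2k+1 ≤ n ≤ 4k, with h(n,k) = C(n-1,k-1) - C(n-k-1,k-1) + 1, the inequality C(n-2,k-2) + C(n-4,k-2) + h(n,k)^2/(C(n-2,k-2) + C(n-4,k-2)) > 2·C(n-1,k-1) holds. -/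
/-!
Write `A = C(n-2,k-2) + C(n-4,k-2)`, `B = C(n-1,k-1)`, `D = C(n-k-1,k-1)`. Clearing the
denominator, the claim reads `(B - A)² + (B - D + 1)² > B²`, which follows from `2DB ≤ (B - A)²`.
By Pascal's rule `B - A ≥ C(n-3,k-1)`, and `D ≤ C(n-9,k-1)` because `k ≥ 8`, so it suffices that
`2 C(n-9,k-1) C(n-1,k-1) ≤ C(n-3,k-1)²`. This comes from the log-concavity of `m ↦ C(m,r)` together
with `C(m,r) / C(m+1,r) = (m+1-r)/(m+1) ≤ 3/4` for `m + 1 ≤ 4r`, since `(3/4)⁴ < 1/2`.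
-/

namespace Nat

theorem four_mul_choose_le_three_mul_choose_succ {m r : ℕ} (h : m + 1 ≤ 4 * r) :
    4 * m.choose r ≤ 3 * (m + 1).choose r := by
  have hstep := choose_mul_succ_eq m r
  have hlin : 4 * (m + 1 - r) ≤ 3 * (m + 1) := by omega
  refine Nat.le_of_mul_le_mul_right ?_ m.succ_pos
  calc 4 * m.choose r * (m + 1) = (m + 1).choose r * (4 * (m + 1 - r)) := by
        rw [mul_assoc, hstep]; ring
    _ ≤ (m + 1).choose r * (3 * (m + 1)) := Nat.mul_le_mul_left _ hlin
    _ = 3 * (m + 1).choose r * (m + 1) := by ring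

theorem four_pow_mul_choose_le {m r s : ℕ} (h : m + s ≤ 4 * r) :
    4 ^ s * m.choose r ≤ 3 ^ s * (m + s).choose r := by
  induction s with
  | zero => simp
  | succ s ih =>
    calc 4 ^ (s + 1) * m.choose r = 4 * (4 ^ s * m.choose r) := by ring
      _ ≤ 4 * (3 ^ s * (m + s).choose r) := Nat.mul_le_mul_left _ (ih (by omega))
      _ = 3 ^ s * (4 * (m + s).choose r) := by ring
      _ ≤ 3 ^ s * (3 * (m + s + 1).choose r) :=
        Nat.mul_le_mul_left _ (four_mul_choose_le_three_mul_choose_succ (by omega))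
      _ = 3 ^ (s + 1) * (m + (s + 1)).choose r := by ring_nf

theorem choose_mul_choose_succ_le_of_le {m m' r : ℕ} (h : m ≤ m') :
    m.choose r * (m' + 1).choose r ≤ (m + 1).choose r * m'.choose r := by
  rcases lt_or_ge m r with hr | hr
  · simp [choose_eq_zero_of_lt hr]
  have e := choose_mul_succ_eq m r
  have e' := choose_mul_succ_eq m' r
  have hlin : (m + 1 - r) * (m' + 1) ≤ (m + 1) * (m' + 1 - r) := by
    zify [hr.trans (Nat.le_succ m), (hr.trans h).trans (Nat.le_succ m')]
    nlinarith
  refine Nat.le_of_mul_le_mul_right (c := (m + 1) * (m' + 1)) ?_ (by positivity)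
  calc m.choose r * (m' + 1).choose r * ((m + 1) * (m' + 1))
        = m.choose r * (m + 1) * ((m' + 1).choose r * (m' + 1)) := by ring
    _ = (m + 1).choose r * (m' + 1).choose r * ((m + 1 - r) * (m' + 1)) := by rw [e]; ring
    _ ≤ (m + 1).choose r * (m' + 1).choose r * ((m + 1) * (m' + 1 - r)) :=
          Nat.mul_le_mul_left _ hlin
    _ = (m + 1).choose r * (m + 1) * ((m' + 1).choose r * (m' + 1 - r)) := by ring
    _ = (m + 1).choose r * m'.choose r * ((m + 1) * (m' + 1)) := by rw [← e']; ring

theorem choose_mul_choose_add_four_le_sq (m r : ℕ) :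
    m.choose r * (m + 4).choose r ≤ (m + 2).choose r ^ 2 := by
  rcases lt_or_ge (m + 1) r with hr | hr
  · simp [choose_eq_zero_of_lt (show m < r by omega)]
  have h₁ := choose_mul_choose_succ_le_of_le (r := r) (show m ≤ m + 2 by omega)
  have h₂ := choose_mul_choose_succ_le_of_le (r := r) (show m + 1 ≤ m + 3 by omega)
  have hpos : 0 < (m + 1).choose r * (m + 3).choose r :=
    Nat.mul_pos (choose_pos hr) (choose_pos (by omega))
  refine Nat.le_of_mul_le_mul_right (c := (m + 1).choose r * (m + 3).choose r) ?_ hpos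
  calc m.choose r * (m + 4).choose r * ((m + 1).choose r * (m + 3).choose r)
        = (m.choose r * (m + 2 + 1).choose r) * ((m + 1).choose r * (m + 3 + 1).choose r) := by
          ring
    _ ≤ ((m + 1).choose r * (m + 2).choose r) * ((m + 1 + 1).choose r * (m + 3).choose r) :=
          Nat.mul_le_mul h₁ h₂
    _ = (m + 2).choose r ^ 2 * ((m + 1).choose r * (m + 3).choose r) := by ring

theorem two_mul_choose_mul_choose_add_eight_le_sq {m r : ℕ} (h : m + 4 ≤ 4 * r) :
    2 * m.choose r * (m + 8).choose r ≤ (m + 6).choose r ^ 2 := by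
  have h₁ := four_pow_mul_choose_le (s := 4) h
  have h₂ := choose_mul_choose_add_four_le_sq (m + 4) r
  refine Nat.le_of_mul_le_mul_left (c := 256) ?_ (by norm_num)
  calc 256 * (2 * m.choose r * (m + 8).choose r)
        = 2 * (4 ^ 4 * m.choose r) * (m + 8).choose r := by ring
    _ ≤ 2 * (3 ^ 4 * (m + 4).choose r) * (m + 8).choose r := by gcongr
    _ = 162 * ((m + 4).choose r * (m + 4 + 4).choose r) := by ring
    _ ≤ 162 * (m + 4 + 2).choose r ^ 2 := Nat.mul_le_mul_left _ h₂
    _ ≤ 256 * (m + 6).choose r ^ 2 := by gcongr; norm_num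

theorem choose_add_three_eq (N r : ℕ) :
    (N + 3).choose (r + 2)
      = (N + 2).choose (r + 1) + N.choose (r + 1) + (N.choose r + (N + 1).choose (r + 2)) := by
  rw [choose_succ_succ' (N + 2), choose_succ_succ' (N + 1) (r + 1), choose_succ_succ' N r]
  ring

end Nat

theorem two_mul_lt_add_sq_div_s11 {a b d : ℝ} (ha : 0 < a)
    (hkey : 2 * d * b ≤ (b - a) ^ 2) : 2 * b < a + (b - d + 1) ^ 2 / a := by
  rw [← sub_lt_iff_lt_add', lt_div_iff₀ ha]
  nlinarith [sq_nonneg (d - 1)]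

theorem stmt_11 (n k : ℕ) (hk : 8 ≤ k) (hn1 : 2 * k + 1 ≤ n) (hn2 : n ≤ 4 * k) :
    ((n - 2).choose (k - 2) : ℝ) + (n - 4).choose (k - 2)
        + (((n - 1).choose (k - 1) - (n - k - 1).choose (k - 1) + 1 : ℕ) : ℝ) ^ 2
          / (((n - 2).choose (k - 2) : ℝ) + (n - 4).choose (k - 2))
      > 2 * (n - 1).choose (k - 1) := by
  obtain ⟨r, rfl⟩ : ∃ r, k = r + 3 := ⟨k - 3, by omega⟩
  obtain ⟨m, rfl⟩ : ∃ m, n = m + 9 := ⟨n - 9, by omega⟩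
  simp only [show m + 9 - 1 = m + 8 by omega, show m + 9 - 2 = m + 7 by omega,
    show m + 9 - 4 = m + 5 by omega, show r + 3 - 1 = r + 2 by omega,
    show r + 3 - 2 = r + 1 by omega]
  set D := (m + 9 - (r + 3) - 1).choose (r + 2)
  have hDm : D ≤ m.choose (r + 2) := Nat.choose_le_choose _ (by omega)
  have hDB : D ≤ (m + 8).choose (r + 2) := hDm.trans (Nat.choose_le_choose _ (by omega))
  have hpascal : (m + 8).choose (r + 2) = (m + 7).choose (r + 1) + (m + 5).choose (r + 1)
      + ((m + 5).choose r + (m + 6).choose (r + 2)) := Nat.choose_add_three_eq (m + 5) r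
  have hkey : 2 * D * (m + 8).choose (r + 2) ≤ ((m + 5).choose r + (m + 6).choose (r + 2)) ^ 2 :=
    calc 2 * D * (m + 8).choose (r + 2)
        ≤ 2 * m.choose (r + 2) * (m + 8).choose (r + 2) := by gcongr
      _ ≤ (m + 6).choose (r + 2) ^ 2 := Nat.two_mul_choose_mul_choose_add_eight_le_sq (by omega)
      _ ≤ _ := by gcongr; omega
  have hA : (0 : ℝ) < (m + 7).choose (r + 1) + (m + 5).choose (r + 1) := by
    have := Nat.choose_pos (show r + 1 ≤ m + 7 by omega)
    positivity
  rw [gt_iff_lt, Nat.cast_add, Nat.cast_one, Nat.cast_sub hDB]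
  refine two_mul_lt_add_sq_div_s11 hA ?_
  have hdiff : ((m + 8).choose (r + 2) : ℝ) - ((m + 7).choose (r + 1) + (m + 5).choose (r + 1))
      = (((m + 5).choose r + (m + 6).choose (r + 2) : ℕ) : ℝ) := by
    rw [hpascal]; push_cast; ring
  rw [hdiff]
  exact_mod_cast hkey
end

section
/- For k ≥ 8 and 3k ≤ n ≤ 4k, with h(n,k) = C(n-1,k-1) - C(n-k-1,k-1) + 1, the inequality C(n,k-2) + h(n,k)^2/C(n,k-2) > 2·C(n-1,k-1) holds. -/
/-!
Write `x = C(n, k-2)`, `b = C(n-1, k-1)` and `h = h(n, k)`; the claim is `(b - x)² + h² > b²`.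
For `n ≥ 3k` one has `x ≤ 3b/4`. The ratio `C(m, k-1) / C(m+1, k-1) = (m+2-k)/(m+1)` is at most
`3k/(4k-1)` for `m < 4k - 1`, and `k` such steps lead from `C(n-k-1, k-1)` to `b`; for `k ≥ 13`
this gives `C(n-k-1, k-1) ≤ b/32`, hence `h > 31b/32` and `(b/4)² + (31b/32)² > b²`.
The finitely many cases `8 ≤ k ≤ 12` are checked by computation.
-/

/-- `h(n, k)`, the size of the Hilton–Milner family. -/
def hiltonMilner (n k : ℕ) : ℕ :=
  (n - 1).choose (k - 1) - (n - k - 1).choose (k - 1) + 1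

theorem Nat.mul_choose_le_mul_choose_succ {m r p q : ℕ} (h : q * (m + 1 - r) ≤ p * (m + 1)) :
    q * m.choose r ≤ p * (m + 1).choose r := by
  refine Nat.le_of_mul_le_mul_right ?_ m.succ_pos
  calc q * m.choose r * (m + 1) = (m + 1).choose r * (q * (m + 1 - r)) := by
        rw [mul_assoc, Nat.choose_mul_succ_eq]; ring
    _ ≤ (m + 1).choose r * (p * (m + 1)) := by gcongr
    _ = p * (m + 1).choose r * (m + 1) := by ring

theorem Nat.pow_mul_choose_le_pow_mul_choose_add {m r p q : ℕ} (j : ℕ)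
    (h : ∀ i < j, q * (m + i + 1 - r) ≤ p * (m + i + 1)) :
    q ^ j * m.choose r ≤ p ^ j * (m + j).choose r := by
  induction j with
  | zero => simp
  | succ j ih =>
    calc q ^ (j + 1) * m.choose r = q * (q ^ j * m.choose r) := by ring
      _ ≤ q * (p ^ j * (m + j).choose r) :=
        Nat.mul_le_mul_left _ (ih fun i hi ↦ h i (by omega))
      _ = p ^ j * (q * (m + j).choose r) := by ring
      _ ≤ p ^ j * (p * (m + j + 1).choose r) :=
        Nat.mul_le_mul_left _ (Nat.mul_choose_le_mul_choose_succ (h j j.lt_succ_self))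
      _ = p ^ (j + 1) * (m + (j + 1)).choose r := by ring_nf

theorem four_mul_choose_sub_two_le (n k : ℕ) (hk : 2 ≤ k) (hn : 3 * k ≤ n) :
    4 * n.choose (k - 2) ≤ 3 * (n - 1).choose (k - 1) := by
  obtain ⟨r, rfl⟩ : ∃ r, k = r + 2 := ⟨k - 2, by omega⟩
  obtain ⟨m, rfl⟩ : ∃ m, n = m + 1 := ⟨n - 1, by omega⟩
  simp only [Nat.add_sub_cancel, show r + 2 - 1 = r + 1 by omega]
  have hup : (m + 1).choose (r + 1) * (r + 1) = (m + 1).choose r * (m + 1 - r) :=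
    Nat.choose_succ_right_eq _ _
  have hdown : m.choose (r + 1) * (m + 1) = (m + 1).choose (r + 1) * (m - r) := by
    rw [Nat.choose_mul_succ_eq, Nat.add_sub_add_right]
  have hscal : 4 * (m + 1) * (r + 1) ≤ 3 * ((m - r) * (m + 1 - r)) := by
    obtain ⟨d, rfl⟩ : ∃ d, m = 3 * r + 5 + d := ⟨m - (3 * r + 5), by omega⟩
    rw [show 3 * r + 5 + d - r = 2 * r + 5 + d by omega,
      show 3 * r + 5 + d + 1 - r = 2 * r + 6 + d by omega]
    nlinarith
  refine Nat.le_of_mul_le_mul_right (c := (m - r) * (m + 1 - r)) ?_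
    (Nat.mul_pos (by omega) (by omega))
  calc 4 * (m + 1).choose r * ((m - r) * (m + 1 - r))
      = 4 * (m - r) * ((m + 1).choose r * (m + 1 - r)) := by ring
    _ = 4 * (r + 1) * (m.choose (r + 1) * (m + 1)) := by rw [← hup, hdown]; ring
    _ = 4 * (m + 1) * (r + 1) * m.choose (r + 1) := by ring
    _ ≤ 3 * ((m - r) * (m + 1 - r)) * m.choose (r + 1) := by gcongr
    _ = 3 * m.choose (r + 1) * ((m - r) * (m + 1 - r)) := by ring

theorem pow_mul_choose_sub_le_pow_mul_choose (n k : ℕ) (hkn : k < n) (hn : n ≤ 4 * k) :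
    (4 * k - 1) ^ k * (n - k - 1).choose (k - 1) ≤ (3 * k) ^ k * (n - 1).choose (k - 1) := by
  have hstep : ∀ M ≤ 4 * k - 1, (4 * k - 1) * (M - (k - 1)) ≤ 3 * k * M := by
    intro M hM
    rcases le_or_gt M (k - 1) with hMk | hMk
    · simp [Nat.sub_eq_zero_of_le hMk]
    · zify [hMk.le, show 1 ≤ k by omega, show 1 ≤ 4 * k by omega] at hM ⊢
      nlinarith [mul_nonneg (sub_nonneg.2 (show (1 : ℤ) ≤ k by omega)) (sub_nonneg.2 hM)]
  have h := Nat.pow_mul_choose_le_pow_mul_choose_add (m := n - k - 1) (r := k - 1) k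
    fun i hi ↦ hstep (n - k - 1 + i + 1) (by omega)
  rwa [show n - k - 1 + k = n - 1 by omega] at h

theorem thirty_two_mul_thirteen_pow_le (k : ℕ) (hk : 13 ≤ k) : 32 * 13 ^ k ≤ 17 ^ k := by
  induction k, hk using Nat.le_induction with
  | base => norm_num
  | succ k _ ih => rw [pow_succ, pow_succ]; omega

theorem thirty_two_mul_choose_sub_le (n k : ℕ) (hk : 13 ≤ k) (hkn : k < n) (hn : n ≤ 4 * k) :
    32 * (n - k - 1).choose (k - 1) ≤ (n - 1).choose (k - 1) := by
  refine Nat.le_of_mul_le_mul_right (c := 13 ^ k * (3 * k) ^ k) ?_ (by positivity)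
  calc 32 * (n - k - 1).choose (k - 1) * (13 ^ k * (3 * k) ^ k)
      = 32 * 13 ^ k * ((3 * k) ^ k * (n - k - 1).choose (k - 1)) := by ring
    _ ≤ 17 ^ k * ((3 * k) ^ k * (n - k - 1).choose (k - 1)) :=
      Nat.mul_le_mul_right _ (thirty_two_mul_thirteen_pow_le k hk)
    _ = (51 * k) ^ k * (n - k - 1).choose (k - 1) := by
      rw [← mul_assoc, ← mul_pow, ← mul_assoc]; norm_num
    _ ≤ (13 * (4 * k - 1)) ^ k * (n - k - 1).choose (k - 1) :=
      Nat.mul_le_mul_right _ (Nat.pow_le_pow_left (by omega) k)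
    _ = 13 ^ k * ((4 * k - 1) ^ k * (n - k - 1).choose (k - 1)) := by rw [mul_pow]; ring
    _ ≤ 13 ^ k * ((3 * k) ^ k * (n - 1).choose (k - 1)) :=
      Nat.mul_le_mul_left _ (pow_mul_choose_sub_le_pow_mul_choose n k hkn hn)
    _ = (n - 1).choose (k - 1) * (13 ^ k * (3 * k) ^ k) := by ring

theorem two_mul_lt_add_sq_div_s12 {K : Type*} [Field K] [LinearOrder K] [IsStrictOrderedRing K]
    {x b h : K} (hx : 0 < x) (H : 2 * b * x < x ^ 2 + h ^ 2) : 2 * b < x + h ^ 2 / x := by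
  rw [← sub_pos, show x + h ^ 2 / x - 2 * b = (x ^ 2 + h ^ 2 - 2 * b * x) / x by field_simp]
  exact div_pos (by linarith) hx

theorem two_mul_mul_lt_sq_add_sq {K : Type*} [Field K] [LinearOrder K] [IsStrictOrderedRing K]
    {x b h : K} (hx : 0 < x) (hxb : 4 * x ≤ 3 * b) (hh : 31 * b < 32 * h) :
    2 * b * x < x ^ 2 + h ^ 2 := by
  nlinarith [sq_nonneg (4 * (b - x) - b), sq_nonneg (32 * h - 31 * b)]

theorem thirty_one_mul_choose_lt_hiltonMilner (n k : ℕ) (hk : 13 ≤ k) (hkn : k < n)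
    (hn : n ≤ 4 * k) : 31 * (n - 1).choose (k - 1) < 32 * hiltonMilner n k := by
  have ha := thirty_two_mul_choose_sub_le n k hk hkn hn
  unfold hiltonMilner
  omega

theorem two_mul_choose_mul_lt_sq_add_hiltonMilner_sq_of_lt_thirteen (n k : ℕ) (hk : 8 ≤ k)
    (hk' : k < 13) (hn1 : 3 * k ≤ n) (hn2 : n ≤ 4 * k) :
    2 * (n - 1).choose (k - 1) * n.choose (k - 2) <
      n.choose (k - 2) ^ 2 + hiltonMilner n k ^ 2 := by
  -- Kernel evaluation of `Nat.choose` follows Pascal's recursion; `descFactorial` is far cheaper.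
  interval_cases k <;> interval_cases n <;>
    (simp only [hiltonMilner, Nat.choose_eq_descFactorial_div_factorial]; decide)

theorem stmt_12 (n k : ℕ) (hk : 8 ≤ k) (hn1 : 3 * k ≤ n) (hn2 : n ≤ 4 * k) :
    (n.choose (k - 2) : ℝ)
        + (((n - 1).choose (k - 1) - (n - k - 1).choose (k - 1) + 1 : ℕ) : ℝ) ^ 2
          / (n.choose (k - 2) : ℝ)
      > 2 * (n - 1).choose (k - 1) := by
  have hx : (0 : ℝ) < n.choose (k - 2) := by exact_mod_cast Nat.choose_pos (by omega)
  change 2 * _ < _ + (hiltonMilner n k : ℝ) ^ 2 / _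
  refine two_mul_lt_add_sq_div_s12 hx ?_
  rcases lt_or_ge k 13 with hsmall | hbig
  · exact_mod_cast
      two_mul_choose_mul_lt_sq_add_hiltonMilner_sq_of_lt_thirteen n k hk hsmall hn1 hn2
  · refine two_mul_mul_lt_sq_add_sq hx ?_ ?_
    · exact_mod_cast four_mul_choose_sub_two_le n k (by omega) hn1
    · exact_mod_cast thirty_one_mul_choose_lt_hiltonMilner n k hbig (by omega) hn2
end

section
/- Let n = ck+1 where c is an integer with 2 ≤ c ≤ 4 and k ≥ 8. Set x = (k-1)/(n-1) + (k-1)(n-k)(n-k-1)/((n-1)(n-2)(n-3)). Then 1 - x > 1/4, and consequently x(2-x) ≤ 15/16. -/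
/-!
Write `x = a * (1 + b)` with `a = (k - 1)/(n - 1)` and `b = (n - k)(n - k - 1)/((n - 2)(n - 3))`.
Since `n - 1 = c k`, we have `0 ≤ a < 1/c`, and always `b ≤ 1`; so `x < 2/c ≤ 2/3` once `c ≥ 3`.
For `c = 2` one has `b = (k + 1) k / ((2k - 1)(2k - 2)) < 1/2` as soon as `k ≥ 4`, so `x < 3/2 · 1/2`.
Finally `x (2 - x) = 1 - (1 - x)^2`.
-/

section

variable {n k : ℝ}

lemma div_add_div_eq_mul_one_add :
    (k - 1) / (n - 1) + (k - 1) * (n - k) * (n - k - 1) / ((n - 1) * (n - 2) * (n - 3)) =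
      (k - 1) / (n - 1) * (1 + (n - k) * (n - k - 1) / ((n - 2) * (n - 3))) := by
  rw [mul_assoc, mul_assoc, ← div_mul_div_comm]
  ring

lemma div_sub_one_mem_Ico_inv {c : ℝ} (hc : 0 < c) (hk : 1 ≤ k) (hn : n = c * k + 1) :
    0 ≤ (k - 1) / (n - 1) ∧ (k - 1) / (n - 1) < 1 / c := by
  rw [hn, add_sub_cancel_right]
  have hck : 0 < c * k := by positivity
  refine ⟨div_nonneg (by linarith) hck.le, ?_⟩
  rw [div_lt_div_iff₀ hck hc]
  nlinarith

lemma falling_ratio_nonneg (hk : 2 ≤ k) (hkn : k + 1 ≤ n) :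
    0 ≤ (n - k) * (n - k - 1) / ((n - 2) * (n - 3)) := by
  apply div_nonneg <;> apply mul_nonneg <;> linarith

lemma falling_ratio_le_one (hk : 2 ≤ k) (hkn : k + 1 ≤ n) :
    (n - k) * (n - k - 1) / ((n - 2) * (n - 3)) ≤ 1 := by
  refine div_le_one_of_le₀ ?_ (by nlinarith)
  exact mul_le_mul (by linarith) (by linarith) (by linarith) (by linarith)

lemma falling_ratio_lt_half (hk : 4 ≤ k) (hn : n = 2 * k + 1) :
    (n - k) * (n - k - 1) / ((n - 2) * (n - 3)) < 1 / 2 := by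
  subst hn
  rw [div_lt_div_iff₀ (by nlinarith) two_pos]
  nlinarith

lemma mul_one_add_falling_ratio_lt_of_eq_two (hk : 4 ≤ k) (hn : n = 2 * k + 1) :
    (k - 1) / (n - 1) * (1 + (n - k) * (n - k - 1) / ((n - 2) * (n - 3))) < 3 / 4 := by
  obtain ⟨ha0, ha⟩ := div_sub_one_mem_Ico_inv two_pos (by linarith) hn
  have hb0 := falling_ratio_nonneg (by linarith) (by linarith : k + 1 ≤ n)
  have hb := falling_ratio_lt_half hk hn
  nlinarith

lemma mul_one_add_falling_ratio_lt_of_three_le {c : ℝ} (hc : 3 ≤ c) (hk : 2 ≤ k)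
    (hn : n = c * k + 1) :
    (k - 1) / (n - 1) * (1 + (n - k) * (n - k - 1) / ((n - 2) * (n - 3))) < 3 / 4 := by
  obtain ⟨ha0, ha⟩ := div_sub_one_mem_Ico_inv (by linarith) (by linarith) hn
  have hb := falling_ratio_le_one hk (by nlinarith : k + 1 ≤ n)
  have hc' : 1 / c ≤ 1 / 3 := one_div_le_one_div_of_le three_pos hc
  nlinarith

end

lemma mul_two_sub_le_of_lt_one_sub {x : ℝ} (hx : 1 / 4 < 1 - x) : x * (2 - x) ≤ 15 / 16 := by
  nlinarith

theorem stmt_16_general (c k n : ℕ) (hc1 : 2 ≤ c) (hk : 8 ≤ k)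
    (hn : n = c * k + 1)
    (x : ℝ) (hx : x = ((k : ℝ) - 1) / ((n : ℝ) - 1)
        + ((k : ℝ) - 1) * ((n : ℝ) - k) * ((n : ℝ) - k - 1)
          / (((n : ℝ) - 1) * ((n : ℝ) - 2) * ((n : ℝ) - 3))) :
    1 - x > 1 / 4 ∧ x * (2 - x) ≤ 15 / 16 := by
  rw [div_add_div_eq_mul_one_add] at hx
  have hkR : (8 : ℝ) ≤ k := by exact_mod_cast hk
  have hx34 : x < 3 / 4 := by
    rcases (by omega : c = 2 ∨ 3 ≤ c) with rfl | hc3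
    · exact hx ▸ mul_one_add_falling_ratio_lt_of_eq_two (by linarith) (by exact_mod_cast hn)
    · exact hx ▸ mul_one_add_falling_ratio_lt_of_three_le (c := c) (by exact_mod_cast hc3)
        (by linarith) (by exact_mod_cast hn)
  exact ⟨by linarith, mul_two_sub_le_of_lt_one_sub (by linarith)⟩

theorem stmt_16 (c k n : ℕ) (hc1 : 2 ≤ c) (hc2 : c ≤ 4) (hk : 8 ≤ k)
    (hn : n = c * k + 1)
    (x : ℝ) (hx : x = ((k : ℝ) - 1) / ((n : ℝ) - 1)
        + ((k : ℝ) - 1) * ((n : ℝ) - k) * ((n : ℝ) - k - 1)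
          / (((n : ℝ) - 1) * ((n : ℝ) - 2) * ((n : ℝ) - 3))) :
    1 - x > 1 / 4 ∧ x * (2 - x) ≤ 15 / 16 :=
  stmt_16_general c k n hc1 hk hn x hx
end
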